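/- arXiv:1203.3759 — 2 statements merged into one kernel-verified Lean document; each statement's English description precedes it below -/
import Mathlib

section
/- Let R be a commutative ring graded by an abelian group K, and let K' ⊆ K be a subgroup such that K = K' ⊕ K'' splits. Suppose t ∈ R is a homogeneous element whose image in the Veronese subalgebra R_{K''} := ⊕_{w ∈ K''} R_w is K''-prime, and suppose every K-homogeneous element of R can be written as a homogeneous unit times an element of R_{K''}. Then t is K-prime in R. -/
/-!
Multiplying `g` and `h` by homogeneous units moves their degrees into `K''` without changing
divisibility by `t`. The degree-`(deg g + deg h - deg t)` component of any cofactor of `t` in the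
product is again a cofactor, so `K''`-primality of `t` applies to the adjusted elements.
-/

open DirectSum

theorem exists_mem_eq_mul_of_dvd_of_mem {ι A σ : Type*} [DecidableEq ι] [AddLeftCancelMonoid ι]
    [Semiring A] [SetLike σ A] [AddSubmonoidClass σ A] (𝒜 : ι → σ) [GradedRing 𝒜]
    {i j : ι} {t x : A} (ht : t ∈ 𝒜 i) (hx : x ∈ 𝒜 (i + j)) (hdvd : t ∣ x) :
    ∃ c ∈ 𝒜 j, x = t * c := by
  obtain ⟨a, rfl⟩ := hdvd
  exact ⟨decompose 𝒜 a j, (decompose 𝒜 a j).2,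
    by rw [← coe_decompose_mul_add_of_left_mem 𝒜 ht, decompose_of_mem_same 𝒜 hx]⟩

theorem exists_isUnit_mul_mem_of_isHomogeneousElem {R K σ : Type*} [Monoid R] [AddMonoid K]
    [SetLike σ R] (𝒜 : K → σ) [SetLike.GradedMonoid 𝒜] (K'' : Set K)
    (hunits : ∀ w : K, ∃ (u : R) (wu : K), IsUnit u ∧ u ∈ 𝒜 wu ∧ w + wu ∈ K'')
    {g : R} (hg : SetLike.IsHomogeneousElem 𝒜 g) :
    ∃ u w, IsUnit u ∧ w ∈ K'' ∧ g * u ∈ 𝒜 w := by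
  obtain ⟨wg, hg⟩ := hg
  obtain ⟨u, wu, hu, hum, hw⟩ := hunits wg
  exact ⟨u, wg + wu, hu, hw, SetLike.mul_mem_graded hg hum⟩

theorem veronese_prime_implies_K_prime_general
    {R : Type*} [CommRing R]
    {K : Type*} [AddCommGroup K] [DecidableEq K]
    (𝒜 : K → AddSubgroup R) [GradedRing 𝒜]
    (K'' : AddSubgroup K)
    (t : R) (wt : K) (ht : t ∈ 𝒜 wt) (hwt : wt ∈ K'')
    (hprime'' : ∀ (g h : R) (wg wh : K), wg ∈ K'' → wh ∈ K'' →
      g ∈ 𝒜 wg → h ∈ 𝒜 wh →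
      (∃ (c : R) (wc : K), wc ∈ K'' ∧ c ∈ 𝒜 wc ∧ g * h = t * c) →
      (∃ (c : R) (wc : K), wc ∈ K'' ∧ c ∈ 𝒜 wc ∧ g = t * c) ∨
        (∃ (c : R) (wc : K), wc ∈ K'' ∧ c ∈ 𝒜 wc ∧ h = t * c))
    (hunits : ∀ w : K, ∃ (u : R) (wu : K), IsUnit u ∧ u ∈ 𝒜 wu ∧ w + wu ∈ K'') :
    ∀ g h : R, SetLike.IsHomogeneousElem 𝒜 g → SetLike.IsHomogeneousElem 𝒜 h →
      t ∣ g * h → t ∣ g ∨ t ∣ h := by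
  intro g h hg hh hdvd
  obtain ⟨u, wg, hu, hwg, hgu⟩ :=
    exists_isUnit_mul_mem_of_isHomogeneousElem 𝒜 K'' hunits hg
  obtain ⟨v, wh, hv, hwh, hhv⟩ :=
    exists_isUnit_mul_mem_of_isHomogeneousElem 𝒜 K'' hunits hh
  have hprod : g * u * (h * v) ∈ 𝒜 (wt + (wg + wh - wt)) :=
    (add_sub_cancel wt (wg + wh)).symm ▸ SetLike.mul_mem_graded hgu hhv
  have hdvd' : t ∣ g * u * (h * v) :=
    mul_mul_mul_comm g u h v ▸ dvd_mul_of_dvd_left hdvd _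
  obtain ⟨c, hc, hc_eq⟩ := exists_mem_eq_mul_of_dvd_of_mem 𝒜 ht hprod hdvd'
  rcases hprime'' _ _ wg wh hwg hwh hgu hhv
      ⟨c, _, K''.sub_mem (K''.add_mem hwg hwh) hwt, hc, hc_eq⟩ with
    ⟨c, -, -, -, hgc⟩ | ⟨c, -, -, -, hhc⟩
  · exact Or.inl (hu.dvd_mul_right.mp ⟨c, hgc⟩)
  · exact Or.inr (hv.dvd_mul_right.mp ⟨c, hhc⟩)

/-- Let `R` be `K`-graded with `K = K' ⊕ K''`. If a homogeneous element `t` of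
degree in `K''` is `K''`-prime in the Veronese subalgebra `R_{K''}`, and every
homogeneous element of `R` can be moved into `R_{K''}` by a homogeneous unit,
then `t` is `K`-prime in `R`. -/
theorem veronese_prime_implies_K_prime
    {R : Type*} [CommRing R]
    {K : Type*} [AddCommGroup K] [DecidableEq K]
    (𝒜 : K → AddSubgroup R) [GradedRing 𝒜]
    (K' K'' : AddSubgroup K) (hcompl : IsCompl K' K'')
    (t : R) (wt : K) (ht : t ∈ 𝒜 wt) (hwt : wt ∈ K'')
    (ht0 : t ≠ 0) (htu : ¬ IsUnit t)
    (hprime'' : ∀ (g h : R) (wg wh : K), wg ∈ K'' → wh ∈ K'' →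
      g ∈ 𝒜 wg → h ∈ 𝒜 wh →
      (∃ (c : R) (wc : K), wc ∈ K'' ∧ c ∈ 𝒜 wc ∧ g * h = t * c) →
      (∃ (c : R) (wc : K), wc ∈ K'' ∧ c ∈ 𝒜 wc ∧ g = t * c) ∨
        (∃ (c : R) (wc : K), wc ∈ K'' ∧ c ∈ 𝒜 wc ∧ h = t * c))
    (hunits : ∀ w : K, ∃ (u : R) (wu : K), IsUnit u ∧ u ∈ 𝒜 wu ∧ w + wu ∈ K'') :
    ∀ g h : R, SetLike.IsHomogeneousElem 𝒜 g → SetLike.IsHomogeneousElem 𝒜 h →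
      t ∣ g * h → t ∣ g ∨ t ∣ h :=
  veronese_prime_implies_K_prime_general 𝒜 K'' t wt ht hwt hprime'' hunits
end

section
/- (Lemma 5.4 of the paper, special assertion) Let τ = cone(e₁,…,e_n) ⊆ ℚ^n, let v₁,…,v_l ∈ τ be nonzero vectors, let σ be a cone generated by some of e₀,…,e_n,v₁,…,v_l, and let δ ∈ Δ'(n) be a cone of the fan Δ'(n). If ϱ := δ ∩ σ is a one-dimensional cone (a ray) that is not a cone of Δ'(n), then ϱ is contained in some facet of τ, i.e. in cone(e₁,…,ê_i,…,e_n) for some i. -/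
/-- (Lemma 5.4) Let `τ = cone(e₁,…,e_n)`, `v₁,…,v_l ∈ τ` nonzero, `σ` a cone
generated by some of `e₀,…,e_n,v₁,…,v_l`, and `δ` a cone of `Δ'(n)` (spanned by
at most `n-1` of `e₀,…,e_n`). If `ϱ := δ ∩ σ` is a ray which is not a cone of
`Δ'(n)`, then `ϱ` is contained in some facet of `τ`. -/
theorem ray_in_facet
    (n l : ℕ) (hn : 1 ≤ n)
    (E : Fin (n + 1) → Fin n → ℚ)
    (hE : ∀ i j, E i j =
      if (i : ℕ) = 0 then -1 else if (i : ℕ) = (j : ℕ) + 1 then 1 else 0)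
    (v : Fin l → Fin n → ℚ)
    (hv0 : ∀ j, v j ≠ 0) (hvτ : ∀ j i, 0 ≤ v j i)
    (σ : Set (Fin n → ℚ))
    (hσ : ∃ (I : Finset (Fin (n + 1))) (J : Finset (Fin l)),
      σ = {x | ∃ (c : Fin (n + 1) → ℚ) (d : Fin l → ℚ),
        (∀ i, 0 ≤ c i) ∧ (∀ j, 0 ≤ d j) ∧ (∀ i ∉ I, c i = 0) ∧ (∀ j ∉ J, d j = 0) ∧
        x = (∑ i, c i • E i) + ∑ j, d j • v j})
    (δ : Set (Fin n → ℚ))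
    (hδ : ∃ I : Finset (Fin (n + 1)), I.card ≤ n - 1 ∧
      δ = {x | ∃ c : Fin (n + 1) → ℚ,
        (∀ i, 0 ≤ c i) ∧ (∀ i ∉ I, c i = 0) ∧ x = ∑ i, c i • E i})
    (hray : ∃ x : Fin n → ℚ, x ≠ 0 ∧
      δ ∩ σ = {y | ∃ c : ℚ, 0 ≤ c ∧ y = c • x})
    (hnot : ∀ i : Fin (n + 1),
      δ ∩ σ ≠ {y | ∃ c : ℚ, 0 ≤ c ∧ y = c • E i}) :
    ∃ i : Fin n, δ ∩ σ ⊆ {x | (∀ k, 0 ≤ x k) ∧ x i = 0} := by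
  obtain ⟨Iσ, Jσ, hσeq⟩ := hσ
  obtain ⟨Iδ, hIδcard, hδeq⟩ := hδ
  obtain ⟨x, hx0, hxray⟩ := hray
  -- key coordinate computation
  have key : ∀ (c : Fin (n+1) → ℚ) (j : Fin n),
      (∑ i, c i * E i j) = -(c 0) + c j.succ := by
    intro c j
    simp only [hE]
    rw [Fin.sum_univ_succ]
    simp [Fin.val_succ, Fin.val_inj]
  have hxmem : x ∈ δ ∩ σ := by
    rw [hxray]; exact ⟨1, zero_le_one, (one_smul _ _).symm⟩
  obtain ⟨c, hc0, hcI, hcx⟩ := hδeq ▸ hxmem.1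
  obtain ⟨c', d, hc'0, hd0, hc'I, hdJ, hcx'⟩ := hσeq ▸ hxmem.2
  have hxδk : ∀ k : Fin n, x k = -(c 0) + c k.succ := by
    intro k
    have h := congrFun hcx k
    simpa [Finset.sum_apply, key] using h
  have hxσk : ∀ k : Fin n, x k = (-(c' 0) + c' k.succ) + ∑ j, d j * v j k := by
    intro k
    have h := congrFun hcx' k
    simpa [Finset.sum_apply, key] using h
  by_cases hneg : ∃ k, x k < 0
  · exfalso
    obtain ⟨k, hk⟩ := hneg
    have hsum : (0:ℚ) ≤ ∑ j, d j * v j k :=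
      Finset.sum_nonneg fun j _ => mul_nonneg (hd0 j) (hvτ j k)
    have hc'pos : 0 < c' 0 := by
      rcases lt_or_eq_of_le (hc'0 0) with h | h
      · exact h
      · exfalso; have := hxσk k; rw [← h] at this
        have := hc'0 k.succ; nlinarith [hxσk k]
    have hcpos : 0 < c 0 := by
      have := hxδk k; have := hc0 k.succ; linarith
    have h0σ : (0 : Fin (n+1)) ∈ Iσ := by
      by_contra h; exact hc'pos.ne' (hc'I 0 h)
    have h0δ : (0 : Fin (n+1)) ∈ Iδ := by
      by_contra h; exact hcpos.ne' (hcI 0 h)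
    have hE0 : E 0 = ∑ i, (if i = (0:Fin (n+1)) then (1:ℚ) else 0) • E i := by
      funext j
      have h1 : (∑ i, (if i = (0:Fin (n+1)) then (1:ℚ) else 0) • E i) j
          = ∑ i, (if i = (0:Fin (n+1)) then (1:ℚ) else 0) * E i j := by
        simp only [Finset.sum_apply, Pi.smul_apply, smul_eq_mul]
      rw [h1, key]
      simp [hE, Fin.succ_ne_zero]
    have hE0δ : E 0 ∈ δ := by
      rw [hδeq]
      refine ⟨fun i => if i = 0 then 1 else 0, fun i => by dsimp only; split <;> norm_num,
        fun i hi => ?_, hE0⟩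
      simp only [ite_eq_right_iff]
      rintro rfl; exact absurd h0δ hi
    have hE0σ : E 0 ∈ σ := by
      rw [hσeq]
      refine ⟨fun i => if i = 0 then 1 else 0, 0, fun i => by dsimp only; split <;> norm_num,
        fun j => le_refl 0, fun i hi => ?_, fun j _ => rfl, ?_⟩
      · simp only [ite_eq_right_iff]
        rintro rfl; exact absurd h0σ hi
      · simp only [Pi.zero_apply, zero_smul, Finset.sum_const_zero, add_zero]
        exact hE0
    have hE0ray : E 0 ∈ δ ∩ σ := ⟨hE0δ, hE0σ⟩
    rw [hxray] at hE0ray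
    obtain ⟨t, ht0, htE⟩ := hE0ray
    have htpos : 0 < t := by
      rcases lt_or_eq_of_le ht0 with h | h
      · exact h
      · exfalso
        have := congrFun htE k
        rw [← h, zero_smul, hE] at this
        simp at this
    refine hnot 0 ?_
    rw [hxray]
    ext y
    constructor
    · rintro ⟨a, ha, rfl⟩
      refine ⟨a / t, div_nonneg ha ht0, ?_⟩
      rw [htE, smul_smul, div_mul_cancel₀ _ htpos.ne']
    · rintro ⟨b, hb, rfl⟩
      exact ⟨b * t, mul_nonneg hb ht0, by rw [htE, smul_smul]⟩
  · push_neg at hneg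
    have hzero : ∃ i : Fin n, x i = 0 := by
      by_contra h
      push_neg at h
      have hsub : Finset.univ.image (Fin.succ : Fin n → Fin (n+1)) ⊆ Iδ := by
        intro i hi
        simp only [Finset.mem_image, Finset.mem_univ, true_and] at hi
        obtain ⟨j, rfl⟩ := hi
        by_contra hni
        have hc := hcI _ hni
        have := hxδk j
        have := hneg j
        have := hc0 0
        have hne := h j
        rw [hc] at *
        -- x j = -(c 0) ≤ 0 and x j ≥ 0 so x j = 0, contradiction
        have : x j = 0 := le_antisymm (by linarith [hxδk j]) (hneg j)
        exact hne this
      have hcard : n ≤ Iδ.card := by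
        have := Finset.card_le_card hsub
        rwa [Finset.card_image_of_injective _ (Fin.succ_injective n),
          Finset.card_univ, Fintype.card_fin] at this
      omega
    obtain ⟨i, hi⟩ := hzero
    refine ⟨i, fun y hy => ?_⟩
    rw [hxray] at hy
    obtain ⟨a, ha, rfl⟩ := hy
    exact ⟨fun k => mul_nonneg ha (hneg k), by simp [hi]⟩
end
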